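/- arXiv:math/0604634 — 3 statements merged into one kernel-verified Lean document; each statement's English description precedes it below -/
import Mathlib

section
/- Let P_β be the Gibbs measure on {-1,1}^N with H(τ) = (1/2)τᵗJτ, J symmetric with zero diagonal, J ≠ 0, and ‖J‖ ≤ 1. Then for any β > 0, P_β(N^{-1}H(σ) ≤ ψ(β)/(4β)) ≤ 8β²/(Nψ(β)³). -/
noncomputable section

/-- The spin value of a boolean configuration entry: `true ↦ 1`, `false ↦ -1`. -/
def spin (b : Bool) : ℝ := if b then 1 else -1

/-- The Hamiltonian `H(τ) = (1/2) τᵗ J τ = (1/2) ∑_{i,j} J_{ij} τᵢ τⱼ`. -/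
def Ham {N : ℕ} (J : Matrix (Fin N) (Fin N) ℝ) (τ : Fin N → Bool) : ℝ :=
  (1 / 2) * ∑ i, ∑ j, J i j * spin (τ i) * spin (τ j)

/-- The log-partition function `ψ(β) = N⁻¹ log(2^{-N} ∑_τ exp(β H(τ)))`. -/
def logPart {N : ℕ} (J : Matrix (Fin N) (Fin N) ℝ) (β : ℝ) : ℝ :=
  (N : ℝ)⁻¹ * Real.log ((2 : ℝ) ^ (-(N : ℤ)) * ∑ τ : Fin N → Bool, Real.exp (β * Ham J τ))

/-- The Gibbs probability `P_β({τ}) = 2^{-N} exp(β H(τ) − N ψ(β))`. -/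
def gibbs {N : ℕ} (J : Matrix (Fin N) (Fin N) ℝ) (β : ℝ) (τ : Fin N → Bool) : ℝ :=
  (2 : ℝ) ^ (-(N : ℤ)) * Real.exp (β * Ham J τ - N * logPart J β)

/-! Since `∑_τ H(τ) = 0` while `H ≢ 0` (a symmetric zero-diagonal `J` is determined by its
quadratic form on spin vectors), the strict inequality `eˣ > 1 + x` for `x ≠ 0` gives `ψ(β) > 0`; and `H ≤ N ‖J‖ / 2` gives
`ψ(β) ≤ β / 2`. On the event `N⁻¹ H ≤ ψ / (4β)` every Gibbs weight is at most `2⁻ᴺ e^{-3Nψ/4}`,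
so the event has probability at most `e^{-3Nψ/4} ≤ 4 / (3Nψ) ≤ 8β² / (Nψ³)`. -/

open Finset Matrix

lemma spin_not (b : Bool) : spin (!b) = -spin b := by cases b <;> norm_num [spin]

lemma spin_mul_self (b : Bool) : spin b * spin b = 1 := by cases b <;> norm_num [spin]

lemma spin_ne_zero (b : Bool) : spin b ≠ 0 := by cases b <;> norm_num [spin]

section flipSpin

variable {ι : Type*} [DecidableEq ι]

def flipSpin (i : ι) (τ : ι → Bool) : ι → Bool := Function.update τ i (!τ i)

lemma flipSpin_involutive (i : ι) : Function.Involutive (flipSpin i) := by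
  intro τ
  ext j
  by_cases hj : j = i
  · subst hj; simp [flipSpin]
  · simp [flipSpin, hj]

lemma spin_comp_flipSpin (i : ι) (τ : ι → Bool) :
    spin ∘ flipSpin i τ = spin ∘ τ - Pi.single i (2 * spin (τ i)) := by
  ext j
  by_cases hj : j = i
  · subst hj; simp [flipSpin, spin_not]; ring
  · simp [flipSpin, hj]

lemma sum_spin_mul_spin [Fintype ι] {i j : ι} (hij : i ≠ j) :
    ∑ τ : ι → Bool, spin (τ i) * spin (τ j) = 0 := by
  have hflip : ∀ τ : ι → Bool,
      spin (flipSpin i τ i) * spin (flipSpin i τ j) = -(spin (τ i) * spin (τ j)) := fun τ => by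
    simp [flipSpin, hij.symm, spin_not]
  have h := Fintype.sum_equiv (flipSpin_involutive i).toPerm
    (fun τ => -(spin (τ i) * spin (τ j))) (fun τ => spin (τ i) * spin (τ j)) fun τ => (hflip τ).symm
  rw [sum_neg_distrib] at h
  linarith

end flipSpin

lemma dotProduct_mulVec_le_opNorm {n : Type*} [Fintype n] [DecidableEq n] (A : Matrix n n ℝ)
    (x : n → ℝ) :
    x ⬝ᵥ A *ᵥ x ≤ ‖toEuclideanCLM (𝕜 := ℝ) A‖ * ‖WithLp.toLp 2 x‖ ^ 2 := by
  set y := WithLp.toLp 2 x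
  calc x ⬝ᵥ A *ᵥ x = inner ℝ y (toEuclideanCLM (𝕜 := ℝ) A y) := (inner_toEuclideanCLM A y y).symm
    _ ≤ ‖y‖ * ‖toEuclideanCLM (𝕜 := ℝ) A y‖ := real_inner_le_norm _ _
    _ ≤ ‖y‖ * (‖toEuclideanCLM (𝕜 := ℝ) A‖ * ‖y‖) := by
      gcongr
      exact ContinuousLinearMap.le_opNorm _ _
    _ = _ := by ring

section Hamiltonian

variable {N : ℕ} (J : Matrix (Fin N) (Fin N) ℝ)

lemma Ham_eq_dotProduct (τ : Fin N → Bool) :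
    Ham J τ = 2⁻¹ * (spin ∘ τ ⬝ᵥ J *ᵥ (spin ∘ τ)) := by
  rw [Ham, dot_mulVec_eq_sum_sum, sum_comm]
  norm_num [mul_comm]

lemma sum_Ham_eq_zero (hdiag : ∀ i, J i i = 0) : ∑ τ, Ham J τ = 0 := by
  have hpair : ∀ i j, ∑ τ : Fin N → Bool, J i j * spin (τ i) * spin (τ j) = 0 := by
    intro i j
    simp_rw [mul_assoc, ← mul_sum]
    rcases eq_or_ne i j with rfl | hij
    · rw [hdiag, zero_mul]
    · rw [sum_spin_mul_spin hij, mul_zero]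
  simp only [Ham, ← mul_sum]
  rw [sum_comm]
  simp [sum_comm (γ := Fin N → Bool), hpair]

lemma Ham_flipSpin (hsym : J.IsSymm) (hdiag : ∀ i, J i i = 0) (τ : Fin N → Bool) (i : Fin N) :
    Ham J (flipSpin i τ) = Ham J τ - 2 * spin (τ i) * (J *ᵥ (spin ∘ τ)) i := by
  set c := 2 * spin (τ i)
  have hcross : spin ∘ τ ⬝ᵥ J *ᵥ Pi.single i c = c * (J *ᵥ (spin ∘ τ)) i := by
    rw [← dotProduct_transpose_mulVec, hsym, single_dotProduct]
  rw [Ham_eq_dotProduct, Ham_eq_dotProduct, spin_comp_flipSpin, mulVec_sub, dotProduct_sub,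
    sub_dotProduct, sub_dotProduct, hcross, single_dotProduct, single_dotProduct]
  simp [hdiag]
  ring

lemma exists_Ham_ne_zero (hsym : J.IsSymm) (hdiag : ∀ i, J i i = 0) (hJ : J ≠ 0) :
    ∃ τ, Ham J τ ≠ 0 := by
  by_contra! hHam
  -- Flipping one spin forces `J *ᵥ s = 0` for every spin vector `s`; two spin vectors
  -- differing only at `j` then differ by a multiple of the `j`-th basis vector.
  have hrow : ∀ τ, J *ᵥ (spin ∘ τ) = 0 := fun τ => funext fun i => by
    have := Ham_flipSpin J hsym hdiag τ i
    rw [hHam, hHam] at this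
    simpa [spin_ne_zero] using this
  refine hJ (ext fun i j => ?_)
  have := congrFun (hrow (flipSpin j fun _ => true)) i
  rw [spin_comp_flipSpin, mulVec_sub, hrow] at this
  simpa [spin] using this

lemma Ham_le_mul_opNorm (τ : Fin N → Bool) :
    Ham J τ ≤ N * (‖toEuclideanCLM (𝕜 := ℝ) J‖ / 2) := by
  have hnorm : ‖WithLp.toLp 2 (spin ∘ τ)‖ ^ 2 = N := by
    rw [EuclideanSpace.real_norm_sq_eq]
    simp [sq, spin_mul_self]
  have hquad := dotProduct_mulVec_le_opNorm J (spin ∘ τ)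
  rw [hnorm] at hquad
  rw [Ham_eq_dotProduct]
  linarith

end Hamiltonian

lemma card_lt_sum_exp {α : Type*} [Fintype α] (f : α → ℝ) (hf : ∑ a, f a = 0)
    (hne : ∃ a, f a ≠ 0) : (Fintype.card α : ℝ) < ∑ a, Real.exp (f a) := by
  obtain ⟨a, ha⟩ := hne
  calc (Fintype.card α : ℝ) = ∑ a, (f a + 1) := by simp [sum_add_distrib, hf]
    _ < ∑ a, Real.exp (f a) :=
      sum_lt_sum (fun a _ => Real.add_one_le_exp _) ⟨a, mem_univ _, Real.add_one_lt_exp ha⟩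

section logPart

variable {N : ℕ} (J : Matrix (Fin N) (Fin N) ℝ)

lemma two_zpow_neg_mul_card : (2 : ℝ) ^ (-(N : ℤ)) * Fintype.card (Fin N → Bool) = 1 := by
  simp

lemma logPart_pos (hN : 0 < N) (hsym : J.IsSymm) (hdiag : ∀ i, J i i = 0) (hJ : J ≠ 0)
    {β : ℝ} (hβ : β ≠ 0) : 0 < logPart J β := by
  obtain ⟨τ, hτ⟩ := exists_Ham_ne_zero J hsym hdiag hJ
  have hS := card_lt_sum_exp (fun τ => β * Ham J τ)
    (by rw [← mul_sum, sum_Ham_eq_zero J hdiag, mul_zero]) ⟨τ, mul_ne_zero hβ hτ⟩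
  have hZ : 1 < (2 : ℝ) ^ (-(N : ℤ)) * ∑ τ : Fin N → Bool, Real.exp (β * Ham J τ) := by
    rw [← two_zpow_neg_mul_card]
    gcongr
  exact mul_pos (by positivity) (Real.log_pos hZ)

lemma logPart_le (hN : 0 < N) {β c : ℝ} (hβ : 0 ≤ β) (hHam : ∀ τ, Ham J τ ≤ N * c) :
    logPart J β ≤ β * c := by
  have hZ : (2 : ℝ) ^ (-(N : ℤ)) * ∑ τ : Fin N → Bool, Real.exp (β * Ham J τ)
      ≤ Real.exp (N * (β * c)) := by
    calc _ ≤ (2 : ℝ) ^ (-(N : ℤ)) * ∑ _τ : Fin N → Bool, Real.exp (β * (N * c)) := by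
          gcongr with τ
          exact hHam τ
      _ = Real.exp (N * (β * c)) := by
          rw [sum_const, card_univ, nsmul_eq_mul, ← mul_assoc, two_zpow_neg_mul_card, one_mul]
          ring_nf
  have hN' : (0 : ℝ) < N := by exact_mod_cast hN
  rw [logPart, inv_mul_le_iff₀ hN', Real.log_le_iff_le_exp (by positivity)]
  exact hZ

lemma gibbs_energy_lower_tail_le_exp (hN : 0 < N) {β : ℝ} (hβ : 0 ≤ β) (a : ℝ) :
    (∑ τ, if (N : ℝ)⁻¹ * Ham J τ ≤ a then gibbs J β τ else 0)
      ≤ Real.exp (N * (β * a - logPart J β)) := by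
  have hN' : (0 : ℝ) < N := by exact_mod_cast hN
  have hterm : ∀ τ, (if (N : ℝ)⁻¹ * Ham J τ ≤ a then gibbs J β τ else 0)
      ≤ (2 : ℝ) ^ (-(N : ℤ)) * Real.exp (N * (β * a - logPart J β)) := by
    intro τ
    split_ifs with h
    · rw [inv_mul_le_iff₀ hN'] at h
      unfold gibbs
      gcongr
      nlinarith
    · positivity
  calc _ ≤ ∑ _τ : Fin N → Bool, (2 : ℝ) ^ (-(N : ℤ)) * Real.exp (N * (β * a - logPart J β)) :=
        sum_le_sum fun τ _ => hterm τ
    _ = _ := by rw [sum_const, card_univ, nsmul_eq_mul, ← mul_assoc, mul_comm _ ((2 : ℝ) ^ _),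
          two_zpow_neg_mul_card, one_mul]

end logPart

/-- Lemma 2.5 of Chatterjee: for `J ≠ 0` symmetric with zero diagonal and `‖J‖ ≤ 1`,
`P_β(N⁻¹ H(σ) ≤ ψ(β)/(4β)) ≤ 8β²/(N ψ(β)³)` for every `β > 0`. -/
theorem gibbs_energy_lower_tail {N : ℕ} (hN : 0 < N) (J : Matrix (Fin N) (Fin N) ℝ)
    (hsym : J.IsSymm) (hdiag : ∀ i, J i i = 0) (hJ : J ≠ 0)
    (hnorm : ‖Matrix.toEuclideanCLM (𝕜 := ℝ) J‖ ≤ 1) (β : ℝ) (hβ : 0 < β) :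
    (∑ τ, if (N : ℝ)⁻¹ * Ham J τ ≤ logPart J β / (4 * β) then gibbs J β τ else 0) ≤
      8 * β ^ 2 / (N * logPart J β ^ 3) := by
  have hψ := logPart_pos J hN hsym hdiag hJ hβ.ne'
  have hψβ : logPart J β ≤ β / 2 :=
    (logPart_le J hN hβ.le (Ham_le_mul_opNorm J)).trans (by nlinarith)
  set ψ := logPart J β
  have hNψ : 0 < (N : ℝ) * ψ := by positivity
  have hx : 0 < 3 / 4 * (N * ψ) := by positivity
  calc _ ≤ Real.exp (N * (β * (ψ / (4 * β)) - ψ)) := gibbs_energy_lower_tail_le_exp J hN hβ.le _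
    _ = Real.exp (-(3 / 4 * (N * ψ))) := by congr 1; field_simp; ring
    _ ≤ (3 / 4 * (N * ψ))⁻¹ := by
      rw [Real.exp_neg]
      exact inv_anti₀ hx (by linarith [Real.add_one_le_exp (3 / 4 * (N * ψ))])
    _ ≤ 8 * β ^ 2 / (N * ψ ^ 3) := by
      rw [inv_eq_one_div, div_le_div_iff₀ hx (by positivity)]
      have hψ_sq : ψ ^ 2 ≤ 6 * β ^ 2 := by nlinarith
      nlinarith [mul_le_mul_of_nonneg_left hψ_sq hNψ.le]
end
end

section
/- Let τ ∈ {-1,1}^N, J symmetric with zero diagonal and ‖J‖ ≤ 1, and c > 0 with N^{-1}H(τ) ≥ c. Define S_τ(x) = (1/N)∑ᵢ mᵢ(τ)(τᵢ − tanh(x·mᵢ(τ))) for x ≥ 0. Then for any β ≥ 0, |tanh(2β̂(τ)/c) − tanh(2β/c)| ≤ 8|S_τ(β)|/(3c⁵), where β̂(τ) = inf{x ≥ 0 : S_τ(x) = 0} (interpreting tanh(2·∞/c) = 1 if β̂(τ) = ∞). -/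
/-!
With `m` the local fields, `-S_τ'(x) = N⁻¹ ∑ᵢ mᵢ² / cosh² (x mᵢ)`. The bound `‖J‖ ≤ 1` gives
`∑ mᵢ² ≤ N`, and `N⁻¹ H(τ) ≥ c` gives `∑ |mᵢ| ≥ 2cN`; hence the fields with `|mᵢ| ≤ 2/c` carry
`∑ mᵢ² ≥ (9/4) c² N` (Cauchy–Schwarz), and so `-S_τ'(x) ≥ (9/4) c² / cosh² (2x/c)`, the derivative
of `(9/8) c³ tanh (2x/c)`. Thus `S_τ + (9/8) c³ tanh (2 · / c)` is antitone on `[0, ∞)`. Comparing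
`β` with the first zero `β̂`, or letting `x → ∞` when `S_τ` has no zero (it then stays positive),
gives the bound, where `c² ≤ 4/9` turns the constant `(9/8) c³` into `(3/8) c⁵`.
-/

open Real Filter Topology Finset Set Matrix

namespace Real

theorem hasDerivAt_tanh (x : ℝ) : HasDerivAt tanh (cosh x ^ 2)⁻¹ x := by
  have h := (hasDerivAt_sinh x).div (hasDerivAt_cosh x) (cosh_pos x).ne'
  rw [show sinh / cosh = tanh from funext fun y => (tanh_eq_sinh_div_cosh y).symm] at h
  refine h.congr_deriv ?_
  rw [← sq, ← sq, cosh_sq_sub_sinh_sq, one_div]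

theorem tanh_strictMono : StrictMono tanh :=
  strictMono_of_hasDerivAt_pos hasDerivAt_tanh fun x => by positivity

theorem continuous_tanh : Continuous tanh :=
  continuous_iff_continuousAt.2 fun x => (hasDerivAt_tanh x).continuousAt

theorem tanh_eq_one_sub_exp (x : ℝ) : tanh x = (1 - exp (-(2 * x))) / (1 + exp (-(2 * x))) := by
  have hx : exp (-(2 * x)) = exp (-x) * exp (-x) := by rw [← exp_add]; ring_nf
  have hinv : exp x * exp (-x) = 1 := by rw [← exp_add, add_neg_cancel, exp_zero]
  rw [tanh_eq, hx]
  field_simp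
  linear_combination 2 * exp (-x) * hinv

theorem tendsto_tanh_atTop : Tendsto tanh atTop (𝓝 1) := by
  have h : Tendsto (fun x : ℝ => exp (-(2 * x))) atTop (𝓝 0) :=
    tendsto_exp_neg_atTop_nhds_zero.comp (tendsto_id.const_mul_atTop two_pos)
  rw [show tanh = _ from funext tanh_eq_one_sub_exp]
  simpa [Pi.div_def] using
    (tendsto_const_nhds.sub h).div (tendsto_const_nhds.add h) (by norm_num : (1 : ℝ) + 0 ≠ 0)

end Real

theorem sum_sq_mulVec_le_of_norm_le_one {ι : Type*} [Fintype ι] [DecidableEq ι]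
    {J : Matrix ι ι ℝ} (hJ : ‖toEuclideanCLM (𝕜 := ℝ) J‖ ≤ 1) (v : ι → ℝ) :
    ∑ i, (J *ᵥ v) i ^ 2 ≤ ∑ i, v i ^ 2 := by
  have h := (toEuclideanCLM (𝕜 := ℝ) J).le_of_opNorm_le hJ (WithLp.toLp 2 v)
  rw [one_mul, toEuclideanCLM_toLp] at h
  simpa [EuclideanSpace.real_norm_sq_eq] using pow_le_pow_left₀ (norm_nonneg _) h 2

theorem sum_sq_mulVec_le_card_of_norm_le_one {ι : Type*} [Fintype ι] [DecidableEq ι]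
    {J : Matrix ι ι ℝ} (hJ : ‖toEuclideanCLM (𝕜 := ℝ) J‖ ≤ 1) {τ : ι → ℝ}
    (hτ : ∀ i, τ i = 1 ∨ τ i = -1) :
    ∑ i, (J *ᵥ τ) i ^ 2 ≤ Fintype.card ι := by
  have hτ_sq (i : ι) : τ i ^ 2 = 1 := by rcases hτ i with h | h <;> simp [h]
  simpa [hτ_sq] using sum_sq_mulVec_le_of_norm_le_one hJ τ

theorem sum_mul_le_sum_abs_of_abs_le_one {ι : Type*} [Fintype ι] (m τ : ι → ℝ)
    (hτ : ∀ i, |τ i| ≤ 1) : ∑ i, m i * τ i ≤ ∑ i, |m i| :=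
  Finset.sum_le_sum fun i _ => calc
    m i * τ i ≤ |m i| * |τ i| := abs_mul (m i) (τ i) ▸ le_abs_self _
    _ ≤ |m i| := mul_le_of_le_one_right (abs_nonneg _) (hτ i)

section Score

variable {ι : Type*} [Fintype ι] (m τ : ι → ℝ)

/-- The function `S_τ`, with `m` in the role of the local fields `mᵢ(τ)`. -/
noncomputable def pseudolikelihoodScore (x : ℝ) : ℝ :=
  (Fintype.card ι : ℝ)⁻¹ * ∑ i, m i * (τ i - tanh (x * m i))

theorem pseudolikelihoodScore_zero :
    pseudolikelihoodScore m τ 0 = (Fintype.card ι : ℝ)⁻¹ * ∑ i, m i * τ i := by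
  simp [pseudolikelihoodScore]

theorem hasDerivAt_pseudolikelihoodScore (x : ℝ) :
    HasDerivAt (pseudolikelihoodScore m τ)
      (-(Fintype.card ι : ℝ)⁻¹ * ∑ i, m i ^ 2 / cosh (x * m i) ^ 2) x := by
  have h : ∀ i, HasDerivAt (fun y => m i * (τ i - tanh (y * m i)))
      (-(m i ^ 2 / cosh (x * m i) ^ 2)) x := fun i => by
    have hlin : HasDerivAt (fun y => y * m i) (m i) x := by
      simpa using (hasDerivAt_id x).mul_const (m i)
    exact ((((hasDerivAt_tanh _).comp x hlin).const_sub (τ i)).const_mul (m i)).congr_deriv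
      (by ring)
  exact ((HasDerivAt.fun_sum (u := univ) fun i _ => h i).const_mul _).congr_deriv
    (by rw [Finset.sum_neg_distrib]; ring)

theorem continuous_pseudolikelihoodScore : Continuous (pseudolikelihoodScore m τ) :=
  continuous_iff_continuousAt.2 fun x => (hasDerivAt_pseudolikelihoodScore m τ x).continuousAt

theorem sum_abs_filter_lt_le {a : ℝ} (ha : 0 < a) :
    ∑ i with a < |m i|, |m i| ≤ (∑ i, m i ^ 2) / a := by
  rw [le_div_iff₀ ha, Finset.sum_mul]
  calc ∑ i with a < |m i|, |m i| * a ≤ ∑ i with a < |m i|, m i ^ 2 := by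
        refine Finset.sum_le_sum fun i hi => ?_
        rw [← sq_abs, sq]
        exact mul_le_mul_of_nonneg_left (Finset.mem_filter.1 hi).2.le (abs_nonneg _)
    _ ≤ ∑ i, m i ^ 2 := Finset.sum_le_univ_sum_of_nonneg fun i => sq_nonneg _

theorem mul_card_le_sum_sq_filter_abs_le {c : ℝ} (hc : 0 < c)
    (hm2 : ∑ i, m i ^ 2 ≤ Fintype.card ι) (habs : 2 * c * Fintype.card ι ≤ ∑ i, |m i|) :
    9 / 4 * c ^ 2 * Fintype.card ι ≤ ∑ i with |m i| ≤ 2 / c, m i ^ 2 := by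
  set n : ℝ := (Fintype.card ι : ℝ)
  have hlarge : ∑ i with 2 / c < |m i|, |m i| ≤ c / 2 * n :=
    calc ∑ i with 2 / c < |m i|, |m i| ≤ (∑ i, m i ^ 2) / (2 / c) :=
          sum_abs_filter_lt_le m (by positivity)
      _ ≤ n / (2 / c) := by gcongr
      _ = c / 2 * n := by field_simp
  have hsmall : 3 / 2 * c * n ≤ ∑ i with |m i| ≤ 2 / c, |m i| := by
    have hsplit := Finset.sum_filter_add_sum_filter_not univ (fun i => |m i| ≤ 2 / c) (|m ·|)
    simp only [not_le] at hsplit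
    linarith
  have hcs : (∑ i with |m i| ≤ 2 / c, |m i|) ^ 2 ≤ n * ∑ i with |m i| ≤ 2 / c, m i ^ 2 :=
    calc (∑ i with |m i| ≤ 2 / c, |m i|) ^ 2
        ≤ #{i | |m i| ≤ 2 / c} * ∑ i with |m i| ≤ 2 / c, |m i| ^ 2 := sq_sum_le_card_mul_sum_sq
      _ ≤ n * ∑ i with |m i| ≤ 2 / c, m i ^ 2 := by
        simp only [sq_abs]
        exact mul_le_mul_of_nonneg_right (Nat.cast_le.2 (Finset.card_le_univ _))
          (Finset.sum_nonneg fun i _ => sq_nonneg _)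
  rcases (show (0 : ℝ) ≤ n by positivity).eq_or_lt with hn | hn
  · rw [← hn, mul_zero]
    exact Finset.sum_nonneg fun i _ => sq_nonneg _
  · refine le_of_mul_le_mul_left ?_ hn
    calc n * (9 / 4 * c ^ 2 * n) = (3 / 2 * c * n) ^ 2 := by ring
      _ ≤ (∑ i with |m i| ≤ 2 / c, |m i|) ^ 2 := pow_le_pow_left₀ (by positivity) hsmall 2
      _ ≤ n * ∑ i with |m i| ≤ 2 / c, m i ^ 2 := hcs

theorem sq_le_of_sum_sq_le_card [Nonempty ι] {c : ℝ} (hc : 0 < c)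
    (hm2 : ∑ i, m i ^ 2 ≤ Fintype.card ι) (habs : 2 * c * Fintype.card ι ≤ ∑ i, |m i|) :
    c ^ 2 ≤ 4 / 9 := by
  have h := (mul_card_le_sum_sq_filter_abs_le m hc hm2 habs).trans
    ((Finset.sum_le_univ_sum_of_nonneg fun i => sq_nonneg _).trans hm2)
  have := le_of_mul_le_mul_right (h.trans_eq (one_mul _).symm) (Nat.cast_pos.2 Fintype.card_pos)
  linarith

theorem cosh_mul_le_cosh_mul {x y z : ℝ} (hx : 0 ≤ x) (hyz : |y| ≤ z) :
    cosh (x * y) ≤ cosh (x * z) := by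
  rw [cosh_le_cosh, abs_mul, abs_mul, abs_of_nonneg hx, abs_of_nonneg ((abs_nonneg y).trans hyz)]
  exact mul_le_mul_of_nonneg_left hyz hx

theorem mul_card_div_cosh_sq_le_sum_sq_div_cosh_sq {c x : ℝ} (hc : 0 < c) (hx : 0 ≤ x)
    (hm2 : ∑ i, m i ^ 2 ≤ Fintype.card ι) (habs : 2 * c * Fintype.card ι ≤ ∑ i, |m i|) :
    9 / 4 * c ^ 2 * Fintype.card ι / cosh (2 * x / c) ^ 2 ≤ ∑ i, m i ^ 2 / cosh (x * m i) ^ 2 :=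
  calc 9 / 4 * c ^ 2 * Fintype.card ι / cosh (2 * x / c) ^ 2
      ≤ (∑ i with |m i| ≤ 2 / c, m i ^ 2) / cosh (2 * x / c) ^ 2 := by
        gcongr
        exact mul_card_le_sum_sq_filter_abs_le m hc hm2 habs
    _ = ∑ i with |m i| ≤ 2 / c, m i ^ 2 / cosh (2 * x / c) ^ 2 := Finset.sum_div _ _ _
    _ ≤ ∑ i with |m i| ≤ 2 / c, m i ^ 2 / cosh (x * m i) ^ 2 := by
        refine Finset.sum_le_sum fun i hi => ?_
        have hcosh : cosh (x * m i) ≤ cosh (2 * x / c) :=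
          (cosh_mul_le_cosh_mul hx (Finset.mem_filter.1 hi).2).trans_eq (congr_arg cosh (by ring))
        gcongr
    _ ≤ ∑ i, m i ^ 2 / cosh (x * m i) ^ 2 :=
        Finset.sum_le_univ_sum_of_nonneg fun i => by positivity

theorem mul_tanh_sub_le_pseudolikelihoodScore_sub [Nonempty ι] {c : ℝ} (hc : 0 < c)
    (hm2 : ∑ i, m i ^ 2 ≤ Fintype.card ι) (habs : 2 * c * Fintype.card ι ≤ ∑ i, |m i|)
    {a b : ℝ} (ha : 0 ≤ a) (hab : a ≤ b) :
    9 / 8 * c ^ 3 * (tanh (2 * b / c) - tanh (2 * a / c)) ≤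
      pseudolikelihoodScore m τ a - pseudolikelihoodScore m τ b := by
  set n : ℝ := (Fintype.card ι : ℝ)
  have hn : 0 < n := Nat.cast_pos.2 Fintype.card_pos
  have htanh (x : ℝ) :
      HasDerivAt (fun y => tanh (2 * y / c)) ((cosh (2 * x / c) ^ 2)⁻¹ * (2 / c)) x :=
    (hasDerivAt_tanh _).comp x (by simpa using ((hasDerivAt_id x).const_mul 2).div_const c)
  have hanti : AntitoneOn (fun y => pseudolikelihoodScore m τ y + 9 / 8 * c ^ 3 * tanh (2 * y / c))
      (Ici 0) := by
    refine antitoneOn_of_hasDerivWithinAt_nonpos (convex_Ici 0)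
      ((continuous_pseudolikelihoodScore m τ).add
        (continuous_const.mul (continuous_tanh.comp (by fun_prop)))).continuousOn
      (fun x _ => ((hasDerivAt_pseudolikelihoodScore m τ x).add
        ((htanh x).const_mul _)).hasDerivWithinAt) fun x hx => ?_
    rw [interior_Ici] at hx
    have hbound := mul_le_mul_of_nonneg_left
      (mul_card_div_cosh_sq_le_sum_sq_div_cosh_sq m hc hx.le hm2 habs) (inv_nonneg.2 hn.le)
    have hrw : 9 / 8 * c ^ 3 * ((cosh (2 * x / c) ^ 2)⁻¹ * (2 / c)) =
        n⁻¹ * (9 / 4 * c ^ 2 * n / cosh (2 * x / c) ^ 2) := by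
      field_simp
      ring
    linarith
  have := hanti ha (ha.trans hab) hab
  simp only at this
  linarith

end Score

section Inversion

variable {S φ : ℝ → ℝ} {K : ℝ}

theorem mul_abs_sub_le_abs_of_gap (hφ : Monotone φ)
    (hgap : ∀ a b, 0 ≤ a → a ≤ b → K * (φ b - φ a) ≤ S a - S b)
    {z β : ℝ} (hz : 0 ≤ z) (hSz : S z = 0) (hβ : 0 ≤ β) :
    K * |φ z - φ β| ≤ |S β| := by
  rcases le_total β z with hβz | hzβ
  · rw [abs_of_nonneg (sub_nonneg.2 (hφ hβz))]
    linarith [hgap β z hβ hβz, le_abs_self (S β)]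
  · rw [abs_sub_comm, abs_of_nonneg (sub_nonneg.2 (hφ hzβ))]
    linarith [hgap z β hz hzβ, neg_abs_le (S β)]

theorem mul_abs_sub_le_abs_of_gap_of_tendsto (hφ : Monotone φ) {L : ℝ}
    (hL : Tendsto φ atTop (𝓝 L)) (hgap : ∀ a b, 0 ≤ a → a ≤ b → K * (φ b - φ a) ≤ S a - S b)
    (hS : ∀ x, 0 ≤ x → 0 ≤ S x) {β : ℝ} (hβ : 0 ≤ β) :
    K * |L - φ β| ≤ |S β| := by
  rw [abs_of_nonneg (sub_nonneg.2 (hφ.ge_of_tendsto hL β)), abs_of_nonneg (hS β hβ)]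
  refine le_of_tendsto ((hL.sub_const (φ β)).const_mul K) ?_
  filter_upwards [eventually_ge_atTop β] with x hx
  linarith [hgap β x hβ hx, hS x (hβ.trans hx)]

theorem nonneg_of_not_exists_zero (hS : Continuous S) (h0 : 0 ≤ S 0)
    (hne : ¬∃ x, 0 ≤ x ∧ S x = 0) {x : ℝ} (hx : 0 ≤ x) : 0 ≤ S x := by
  by_contra! hneg
  obtain ⟨y, hy, hSy⟩ := intermediate_value_Icc' hx hS.continuousOn ⟨hneg.le, h0⟩
  exact hne ⟨y, hy.1, hSy⟩

theorem sInf_zeros_mem (hS : Continuous S) (h : ∃ x, 0 ≤ x ∧ S x = 0) :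
    0 ≤ sInf {x | 0 ≤ x ∧ S x = 0} ∧ S (sInf {x | 0 ≤ x ∧ S x = 0}) = 0 :=
  ((isClosed_le continuous_const continuous_id).inter (isClosed_eq hS continuous_const)).csInf_mem
    h ⟨0, fun _ hx => hx.1⟩

end Inversion

theorem pseudolikelihood_inversion_general {N : ℕ} (hN : 0 < N)
    (J : Matrix (Fin N) (Fin N) ℝ)
    (hnorm : ‖Matrix.toEuclideanCLM (𝕜 := ℝ) J‖ ≤ 1)
    (τ : Fin N → ℝ) (hτ : ∀ i, τ i = 1 ∨ τ i = -1)
    (m : Fin N → ℝ) (hm : ∀ i, m i = ∑ j, J i j * τ j)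
    (S : ℝ → ℝ) (hS : ∀ x, S x = (1 / (N : ℝ)) * ∑ i, m i * (τ i - Real.tanh (x * m i)))
    (c : ℝ) (hc : 0 < c)
    (hH : c ≤ (N : ℝ)⁻¹ * ((1 / 2) * ∑ i, m i * τ i))
    (β : ℝ) (hβ : 0 ≤ β) :
    ((∃ x : ℝ, 0 ≤ x ∧ S x = 0) →
      |Real.tanh (2 * sInf {x : ℝ | 0 ≤ x ∧ S x = 0} / c) - Real.tanh (2 * β / c)| ≤
        8 * |S β| / (3 * c ^ 5)) ∧
    ((¬ ∃ x : ℝ, 0 ≤ x ∧ S x = 0) →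
      |1 - Real.tanh (2 * β / c)| ≤ 8 * |S β| / (3 * c ^ 5)) := by
  have : Nonempty (Fin N) := ⟨⟨0, hN⟩⟩
  obtain rfl : S = pseudolikelihoodScore m τ :=
    funext fun x => by simp [hS, pseudolikelihoodScore]
  have hm2 : ∑ i, m i ^ 2 ≤ Fintype.card (Fin N) := by
    simpa [← hm, Matrix.mulVec, dotProduct] using sum_sq_mulVec_le_card_of_norm_le_one hnorm hτ
  have habs : 2 * c * Fintype.card (Fin N) ≤ ∑ i, |m i| := by
    have := sum_mul_le_sum_abs_of_abs_le_one m τ fun i => by rcases hτ i with h | h <;> simp [h]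
    rw [Fintype.card_fin]
    rw [le_inv_mul_iff₀ (Nat.cast_pos.2 hN)] at hH
    linarith
  have hK : 3 * c ^ 5 / 8 ≤ 9 / 8 * c ^ 3 := by
    nlinarith [pow_pos hc 3, sq_le_of_sum_sq_le_card m hc hm2 habs]
  set φ : ℝ → ℝ := fun x => tanh (2 * x / c)
  have hφ : Monotone φ := tanh_strictMono.monotone.comp fun a b h => by gcongr
  have hgap (a b : ℝ) (ha : 0 ≤ a) (hab : a ≤ b) :
      3 * c ^ 5 / 8 * (φ b - φ a) ≤ pseudolikelihoodScore m τ a - pseudolikelihoodScore m τ b :=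
    (mul_le_mul_of_nonneg_right hK (sub_nonneg.2 (hφ hab))).trans
      (mul_tanh_sub_le_pseudolikelihoodScore_sub m τ hc hm2 habs ha hab)
  have hdiv (Δ : ℝ) (h : 3 * c ^ 5 / 8 * Δ ≤ |pseudolikelihoodScore m τ β|) :
      Δ ≤ 8 * |pseudolikelihoodScore m τ β| / (3 * c ^ 5) :=
    (le_div_iff₀ (by positivity)).2 (by linarith)
  have hcont := continuous_pseudolikelihoodScore m τ
  refine ⟨fun hex => hdiv _ ?_, fun hne => hdiv _ ?_⟩
  · obtain ⟨hz, hSz⟩ := sInf_zeros_mem hcont hex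
    exact mul_abs_sub_le_abs_of_gap hφ hgap hz hSz hβ
  · have hS0 : 0 ≤ pseudolikelihoodScore m τ 0 := by
      rw [pseudolikelihoodScore_zero, Fintype.card_fin]
      linarith
    exact mul_abs_sub_le_abs_of_gap_of_tendsto hφ
      (tendsto_tanh_atTop.comp ((tendsto_id.const_mul_atTop two_pos).atTop_div_const hc)) hgap
      (fun x hx => nonneg_of_not_exists_zero hcont hS0 hne hx) hβ

/-- Lemma 2.2 of Chatterjee: if `N⁻¹ H(τ) ≥ c > 0` then for any `β ≥ 0`,
`|tanh(2β̂(τ)/c) − tanh(2β/c)| ≤ 8|S_τ(β)|/(3c⁵)`, where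
`S_τ(x) = (1/N) ∑ᵢ mᵢ(τ)(τᵢ − tanh(x mᵢ(τ)))` with `mᵢ(τ) = ∑ⱼ J_{ij} τⱼ`,
`H(τ) = (1/2) ∑ᵢ mᵢ(τ) τᵢ`, and `β̂(τ) = inf {x ≥ 0 : S_τ(x) = 0}`; when the set of
zeros is empty (`β̂(τ) = ∞`) we interpret `tanh(2β̂(τ)/c) = 1`. -/
theorem pseudolikelihood_inversion {N : ℕ} (hN : 0 < N)
    (J : Matrix (Fin N) (Fin N) ℝ) (hsym : J.IsSymm) (hdiag : ∀ i, J i i = 0)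
    (hnorm : ‖Matrix.toEuclideanCLM (𝕜 := ℝ) J‖ ≤ 1)
    (τ : Fin N → ℝ) (hτ : ∀ i, τ i = 1 ∨ τ i = -1)
    (m : Fin N → ℝ) (hm : ∀ i, m i = ∑ j, J i j * τ j)
    (S : ℝ → ℝ) (hS : ∀ x, S x = (1 / (N : ℝ)) * ∑ i, m i * (τ i - Real.tanh (x * m i)))
    (c : ℝ) (hc : 0 < c)
    (hH : c ≤ (N : ℝ)⁻¹ * ((1 / 2) * ∑ i, m i * τ i))
    (β : ℝ) (hβ : 0 ≤ β) :
    ((∃ x : ℝ, 0 ≤ x ∧ S x = 0) →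
      |Real.tanh (2 * sInf {x : ℝ | 0 ≤ x ∧ S x = 0} / c) - Real.tanh (2 * β / c)| ≤
        8 * |S β| / (3 * c ^ 5)) ∧
    ((¬ ∃ x : ℝ, 0 ≤ x ∧ S x = 0) →
      |1 - Real.tanh (2 * β / c)| ≤ 8 * |S β| / (3 * c ^ 5)) :=
  pseudolikelihood_inversion_general hN J hnorm τ hτ m hm S hS c hc hH β hβ
end

section
/- Let σ be distributed according to the Gibbs measure P_β on {-1,1}^N with H(τ) = (1/2)∑_{i,j}J_{ij}τᵢτⱼ, J symmetric with zero diagonal and ‖J‖ ≤ 1. Let S_σ(β) = (1/N)∑ᵢ mᵢ(σ)(σᵢ − tanh(β·mᵢ(σ))). Then E_β[S_σ(β)²] ≤ (6 + 6β + 2β²)/N. -/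
noncomputable section

/-- The local field `mᵢ(τ) = ∑ⱼ J_{ij} τⱼ`. -/
def localField {N : ℕ} (J : Matrix (Fin N) (Fin N) ℝ) (τ : Fin N → Bool) (i : Fin N) : ℝ :=
  ∑ j, J i j * spin (τ j)

/-- The pseudolikelihood score `S_σ(β) = (1/N) ∑ᵢ mᵢ(σ)(σᵢ − tanh(β mᵢ(σ)))`. -/
def score {N : ℕ} (J : Matrix (Fin N) (Fin N) ℝ) (β : ℝ) (τ : Fin N → Bool) : ℝ :=
  (1 / (N : ℝ)) *
    ∑ i, localField J τ i * (spin (τ i) - Real.tanh (β * localField J τ i))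

namespace ChatterjeeAux

lemma abs_tanh_le_one (x : ℝ) : |Real.tanh x| ≤ 1 := by
  rw [Real.tanh_eq_sinh_div_cosh, abs_div, abs_of_pos (Real.cosh_pos x),
    div_le_one (Real.cosh_pos x), Real.abs_sinh, ← Real.cosh_abs]
  exact le_of_lt (Real.sinh_lt_cosh _)

lemma tanh_sq_le_one (x : ℝ) : Real.tanh x ^ 2 ≤ 1 := by
  have h := abs_tanh_le_one x
  calc Real.tanh x ^ 2 = |Real.tanh x| ^ 2 := (sq_abs _).symm
  _ ≤ 1 ^ 2 := by exact pow_le_pow_left₀ (abs_nonneg _) h 2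
  _ = 1 := one_pow 2

lemma hasDerivAt_tanh (x : ℝ) :
    HasDerivAt Real.tanh (1 - Real.tanh x ^ 2) x := by
  have h := (Real.hasDerivAt_sinh x).div (Real.hasDerivAt_cosh x) (Real.cosh_pos x).ne'
  have heq : Real.tanh = fun y => Real.sinh y / Real.cosh y := by
    funext y; exact Real.tanh_eq_sinh_div_cosh y
  rw [heq]
  refine h.congr_deriv (Eq.symm ?_)
  have hc := (Real.cosh_pos x).ne'
  show 1 - (Real.sinh x / Real.cosh x) ^ 2 = _
  field_simp

lemma mono_aux {g g' : ℝ → ℝ} (hd : ∀ x, HasDerivAt g (g' x) x) {a b : ℝ} (hab : a ≤ b)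
    (h : ∀ x, a ≤ x → x ≤ b → 0 ≤ g' x) : g a ≤ g b := by
  have hmono : MonotoneOn g (Set.Icc a b) := by
    apply monotoneOn_of_deriv_nonneg (convex_Icc a b)
    · exact fun x _ => ((hd x).differentiableAt.continuousAt).continuousWithinAt
    · exact fun x _ => (hd x).differentiableAt.differentiableWithinAt
    · intro x hx
      rw [interior_Icc] at hx
      rw [(hd x).deriv]
      exact h x hx.1.le hx.2.le
  exact hmono (Set.left_mem_Icc.2 hab) (Set.right_mem_Icc.2 hab) hab

lemma anti_aux {g g' : ℝ → ℝ} (hd : ∀ x, HasDerivAt g (g' x) x) {a b : ℝ} (hab : a ≤ b)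
    (h : ∀ x, a ≤ x → x ≤ b → g' x ≤ 0) : g b ≤ g a := by
  have hmono : AntitoneOn g (Set.Icc a b) := by
    apply antitoneOn_of_deriv_nonpos (convex_Icc a b)
    · exact fun x _ => ((hd x).differentiableAt.continuousAt).continuousWithinAt
    · exact fun x _ => (hd x).differentiableAt.differentiableWithinAt
    · intro x hx
      rw [interior_Icc] at hx
      rw [(hd x).deriv]
      exact h x hx.1.le hx.2.le
  exact hmono (Set.left_mem_Icc.2 hab) (Set.right_mem_Icc.2 hab) hab

lemma lip_aux {g g' : ℝ → ℝ} (hd : ∀ x, HasDerivAt g (g' x) x) {C : ℝ}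
    (hb : ∀ x, |g' x| ≤ C) (a b : ℝ) : |g b - g a| ≤ C * |b - a| := by
  have hCx : ∀ x : ℝ, HasDerivAt (fun y : ℝ => C * y) C x := by
    intro x
    simpa using (hasDerivAt_id x).const_mul C
  have key : ∀ u v : ℝ, u ≤ v → |g v - g u| ≤ C * (v - u) := by
    intro u v huv
    have h1 : (fun y : ℝ => C * y - g y) u ≤ (fun y : ℝ => C * y - g y) v := by
      apply mono_aux (g' := fun y => C - g' y) (fun x => (hCx x).sub (hd x)) huv
      intro x _ _
      have := (abs_le.1 (hb x)).2
      show 0 ≤ C - g' x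
      linarith
    have h2 : (fun y : ℝ => C * y + g y) u ≤ (fun y : ℝ => C * y + g y) v := by
      apply mono_aux (g' := fun y => C + g' y) (fun x => (hCx x).add (hd x)) huv
      intro x _ _
      have := (abs_le.1 (hb x)).1
      show 0 ≤ C + g' x
      linarith
    have h1' : C * u - g u ≤ C * v - g v := h1
    have h2' : C * u + g u ≤ C * v + g v := h2
    rw [abs_le]
    constructor <;> nlinarith
  rcases le_total a b with hab | hab
  · rw [abs_of_nonneg (by linarith : (0:ℝ) ≤ b - a)]
    exact key a b hab
  · rw [abs_sub_comm, abs_of_nonpos (by linarith : b - a ≤ 0), neg_sub]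
    exact key b a hab

lemma tanh_lipschitz (a b : ℝ) : |Real.tanh a - Real.tanh b| ≤ |a - b| := by
  have := lip_aux (g := Real.tanh) (g' := fun x => 1 - Real.tanh x ^ 2)
    (fun x => hasDerivAt_tanh x) (C := 1)
    (fun x => by
      have h2 := tanh_sq_le_one x
      have h3 : 0 ≤ Real.tanh x ^ 2 := sq_nonneg _
      show |1 - Real.tanh x ^ 2| ≤ 1
      rw [abs_of_nonneg (by linarith)]; linarith) b a
  simpa using this

lemma tanh_sq_lipschitz (a b : ℝ) : |Real.tanh a ^ 2 - Real.tanh b ^ 2| ≤ |a - b| := by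
  have := lip_aux (g := fun x => Real.tanh x ^ 2)
    (g' := fun x => 2 * Real.tanh x * (1 - Real.tanh x ^ 2))
    (fun x => by
      have h := (hasDerivAt_tanh x).pow 2
      exact h.congr_deriv (by push_cast; ring))
    (C := 1)
    (fun x => by
      have h1 : -1 ≤ Real.tanh x := by have := (abs_le.1 (abs_tanh_le_one x)).1; linarith
      have h2 : Real.tanh x ≤ 1 := (abs_le.1 (abs_tanh_le_one x)).2
      show |2 * Real.tanh x * (1 - Real.tanh x ^ 2)| ≤ 1
      rw [abs_le]
      constructor <;> nlinarith [sq_nonneg (Real.tanh x - 1/2), sq_nonneg (Real.tanh x + 1/2),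
        sq_nonneg (Real.tanh x - 1), sq_nonneg (Real.tanh x + 1)]) b a
  simpa using this

lemma quad_bound {f f' : ℝ → ℝ} (hd : ∀ x, HasDerivAt f (f' x) x) {q : ℝ} (h0 : f q = 0)
    (hb : ∀ x, |f' x| ≤ |x - q|) (p : ℝ) : |f p| ≤ (p - q) ^ 2 / 2 := by
  have hderiv : ∀ (c x : ℝ),
      HasDerivAt (fun s : ℝ => (s - q) ^ 2 / 2 + c * f s) ((x - q) + c * f' x) x := by
    intro c x
    have h1 : HasDerivAt (fun s : ℝ => (s - q) ^ 2 / 2) (x - q) x := by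
      have := (((hasDerivAt_id x).sub_const q).pow 2).div_const 2
      simpa using this
    exact h1.add ((hd x).const_mul c)
  have claim : ∀ c : ℝ, |c| = 1 → 0 ≤ (p - q) ^ 2 / 2 + c * f p := by
    intro c hc
    have habs : ∀ x : ℝ, |c * f' x| ≤ |x - q| := by
      intro x; rw [abs_mul, hc, one_mul]; exact hb x
    rcases le_total q p with hqp | hqp
    · have := mono_aux (g' := fun x => (x - q) + c * f' x) (hderiv c) hqp
        (fun x hx1 _ => by
          have := (abs_le.1 (habs x)).1
          rw [abs_of_nonneg (by linarith)] at this
          show 0 ≤ (x - q) + c * f' x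
          linarith)
      rw [h0, mul_zero, add_zero, sub_self] at this
      norm_num at this
      nlinarith
    · have := anti_aux (g' := fun x => (x - q) + c * f' x) (hderiv c) hqp
        (fun x _ hx2 => by
          have := (abs_le.1 (habs x)).2
          rw [abs_of_nonpos (by linarith)] at this
          show (x - q) + c * f' x ≤ 0
          linarith)
      rw [h0, mul_zero, add_zero, sub_self] at this
      norm_num at this
      nlinarith
  have hu := claim (-1) (by norm_num)
  have hl := claim 1 (by norm_num)
  rw [abs_le]
  constructor <;> nlinarith

/-- Second-order Taylor bound for tanh at `q`. -/
lemma tanh_taylor (q p : ℝ) :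
    |Real.tanh p - Real.tanh q - (p - q) * (1 - Real.tanh q ^ 2)| ≤ (p - q) ^ 2 / 2 := by
  have hd : ∀ x : ℝ, HasDerivAt
      (fun s : ℝ => Real.tanh s - Real.tanh q - (s - q) * (1 - Real.tanh q ^ 2))
      (Real.tanh q ^ 2 - Real.tanh x ^ 2) x := by
    intro x
    have h1 := hasDerivAt_tanh x
    have h2 : HasDerivAt (fun s : ℝ => Real.tanh q + (s - q) * (1 - Real.tanh q ^ 2))
        (1 - Real.tanh q ^ 2) x := by
      have := ((hasDerivAt_id x).sub_const q).const_mul (1 - Real.tanh q ^ 2)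
      have h3 : HasDerivAt (fun s : ℝ => (1 - Real.tanh q ^ 2) * (s - q))
          (1 - Real.tanh q ^ 2) x := by simpa using this
      have h4 := h3.const_add (Real.tanh q)
      exact h4.congr_of_eventuallyEq (Filter.Eventually.of_forall fun s => by ring)
    have := h1.sub h2
    exact (this.congr_deriv (by ring)).congr_of_eventuallyEq
      (Filter.Eventually.of_forall fun s => by simp only [Pi.sub_apply]; ring)
  have h0 : Real.tanh q - Real.tanh q - (q - q) * (1 - Real.tanh q ^ 2) = 0 := by ring
  have hb : ∀ x : ℝ, |Real.tanh q ^ 2 - Real.tanh x ^ 2| ≤ |x - q| := by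
    intro x
    have := tanh_sq_lipschitz q x
    rwa [abs_sub_comm q x] at this
  exact quad_bound hd h0 hb p


@[simp] lemma spin_not (b : Bool) : spin (!b) = - spin b := by cases b <;> simp [spin]

lemma spin_mul_self (b : Bool) : spin b * spin b = 1 := by cases b <;> norm_num [spin]

lemma abs_spin (b : Bool) : |spin b| = 1 := by cases b <;> norm_num [spin]

variable {N : ℕ} (J : Matrix (Fin N) (Fin N) ℝ) (β : ℝ)

/-- flip the `i`-th coordinate -/
def flp (τ : Fin N → Bool) (i : Fin N) : Fin N → Bool := Function.update τ i (!(τ i))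

lemma flp_apply_self (τ : Fin N → Bool) (i : Fin N) : flp τ i i = !(τ i) := by
  simp [flp]

lemma flp_apply_ne (τ : Fin N → Bool) {i j : Fin N} (h : j ≠ i) : flp τ i j = τ j := by
  simp [flp, Function.update_of_ne h]

lemma flp_flp (τ : Fin N → Bool) (i : Fin N) : flp (flp τ i) i = τ := by
  funext j
  rcases eq_or_ne j i with rfl | h
  · simp [flp]
  · simp [flp, Function.update_of_ne h]

lemma sum_flp (i : Fin N) (g : (Fin N → Bool) → ℝ) :
    ∑ τ : Fin N → Bool, g (flp τ i) = ∑ τ : Fin N → Bool, g τ := by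
  apply Finset.sum_nbij' (fun τ => flp τ i) (fun τ => flp τ i) <;>
    simp [flp_flp]

lemma localField_flp (τ : Fin N → Bool) (i j : Fin N) :
    localField J (flp τ i) j = localField J τ j - 2 * spin (τ i) * J j i := by
  unfold localField
  have key : ∀ k, J j k * spin (flp τ i k) =
      J j k * spin (τ k) + (if k = i then -2 * spin (τ i) * J j i else 0) := by
    intro k
    rcases eq_or_ne k i with rfl | h
    · simp [flp_apply_self]; ring
    · simp [flp_apply_ne τ h, h]
  rw [Finset.sum_congr rfl (fun k _ => key k), Finset.sum_add_distrib,
    Finset.sum_ite_eq' Finset.univ i (fun _ => -2 * spin (τ i) * J j i)]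
  simp; ring

lemma localField_flp_self (hdiag : ∀ i, J i i = 0) (τ : Fin N → Bool) (i : Fin N) :
    localField J (flp τ i) i = localField J τ i := by
  rw [localField_flp, hdiag]; ring

lemma ham_eq (τ : Fin N → Bool) :
    Ham J τ = (1 / 2) * ∑ j, spin (τ j) * localField J τ j := by
  unfold Ham localField
  congr 1
  apply Finset.sum_congr rfl
  intro j _
  rw [Finset.mul_sum]
  apply Finset.sum_congr rfl
  intro k _
  ring

lemma ham_flp (hsym : J.IsSymm) (hdiag : ∀ i, J i i = 0) (τ : Fin N → Bool) (i : Fin N) :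
    Ham J (flp τ i) = Ham J τ - 2 * spin (τ i) * localField J τ i := by
  have hJ : ∀ a b : Fin N, J a b = J b a := fun a b => by
    conv_lhs => rw [← hsym]
    rfl
  rw [ham_eq, ham_eq]
  have key : ∀ j, spin (flp τ i j) * localField J (flp τ i) j =
      spin (τ j) * localField J τ j - 2 * spin (τ i) * (J j i * spin (τ j))
        + (if j = i then -2 * spin (τ i) * localField J τ i
            + 4 * (spin (τ i) * spin (τ i)) * J i i else 0) := by
    intro j
    rcases eq_or_ne j i with rfl | h
    · rw [localField_flp]
      simp [flp_apply_self]
      ring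
    · rw [localField_flp, flp_apply_ne τ h]
      simp only [h, if_false]
      ring
  rw [Finset.sum_congr rfl (fun j _ => key j), Finset.sum_add_distrib, Finset.sum_sub_distrib,
    Finset.sum_ite_eq' Finset.univ i
      (fun _ => -2 * spin (τ i) * localField J τ i + 4 * (spin (τ i) * spin (τ i)) * J i i)]
  have h2 : ∑ j, 2 * spin (τ i) * (J j i * spin (τ j)) = 2 * spin (τ i) * localField J τ i := by
    rw [← Finset.mul_sum]
    congr 1
    unfold localField
    apply Finset.sum_congr rfl
    intro j _
    rw [hJ i j]
  rw [h2, hdiag i]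
  simp only [Finset.mem_univ, if_true, mul_zero, add_zero]
  ring


lemma gibbs_nonneg (τ : Fin N → Bool) : 0 ≤ gibbs J β τ := by
  unfold gibbs
  positivity

lemma sum_gibbs (hN : 0 < N) : ∑ τ : Fin N → Bool, gibbs J β τ = 1 := by
  unfold gibbs
  have hX : (0:ℝ) < (2 : ℝ) ^ (-(N : ℤ)) * ∑ τ : Fin N → Bool, Real.exp (β * Ham J τ) := by
    apply mul_pos (by positivity)
    apply Finset.sum_pos (fun τ _ => Real.exp_pos _)
    exact Finset.univ_nonempty
  have hlog : (N : ℝ) * logPart J β =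
      Real.log ((2 : ℝ) ^ (-(N : ℤ)) * ∑ τ : Fin N → Bool, Real.exp (β * Ham J τ)) := by
    unfold logPart
    rw [← mul_assoc, mul_inv_cancel₀ (by exact_mod_cast hN.ne' : (N:ℝ) ≠ 0), one_mul]
  have : ∀ τ : Fin N → Bool, Real.exp (β * Ham J τ - N * logPart J β) =
      Real.exp (β * Ham J τ) /
        ((2 : ℝ) ^ (-(N : ℤ)) * ∑ τ : Fin N → Bool, Real.exp (β * Ham J τ)) := by
    intro τ
    rw [Real.exp_sub, hlog, Real.exp_log hX]
  rw [Finset.sum_congr rfl (fun τ _ => by rw [this τ])]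
  rw [← Finset.mul_sum, ← Finset.sum_div]
  field_simp

lemma gibbs_flp (hsym : J.IsSymm) (hdiag : ∀ i, J i i = 0) (τ : Fin N → Bool) (i : Fin N) :
    gibbs J β (flp τ i) =
      Real.exp (-2 * β * spin (τ i) * localField J τ i) * gibbs J β τ := by
  unfold gibbs
  rw [ham_flp J hsym hdiag τ i,
    show β * (Ham J τ - 2 * spin (τ i) * localField J τ i) - N * logPart J β =
      (-2 * β * spin (τ i) * localField J τ i) + (β * Ham J τ - N * logPart J β) from by ring,
    Real.exp_add]
  ring

/-- the key ±1 scalar identity -/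
lemma exp_tanh_identity (x : ℝ) :
    Real.exp (-(2 * x)) * (1 + Real.tanh x) = 1 - Real.tanh x := by
  have hD : Real.exp x + Real.exp (-x) ≠ 0 := by positivity
  have hplus : 1 + Real.tanh x = (2 * Real.exp x) / (Real.exp x + Real.exp (-x)) := by
    rw [Real.tanh_eq_sinh_div_cosh, Real.sinh_eq, Real.cosh_eq]
    field_simp
    ring
  have hminus : 1 - Real.tanh x = (2 * Real.exp (-x)) / (Real.exp x + Real.exp (-x)) := by
    rw [Real.tanh_eq_sinh_div_cosh, Real.sinh_eq, Real.cosh_eq]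
    field_simp
    ring
  have key : Real.exp (-(2*x)) * (2 * Real.exp x) = 2 * Real.exp (-x) := by
    rw [show (2:ℝ) * Real.exp x = Real.exp x * 2 from by ring, ← mul_assoc, ← Real.exp_add]
    rw [show -(2*x) + x = -x from by ring]
    ring
  rw [hplus, hminus, mul_div_assoc', key]

/-- the weight function -/
def wgt (i : Fin N) (τ : Fin N → Bool) : ℝ :=
  gibbs J β τ * (localField J τ i * (spin (τ i) - Real.tanh (β * localField J τ i)))

lemma wgt_flp (hsym : J.IsSymm) (hdiag : ∀ i, J i i = 0) (τ : Fin N → Bool) (i : Fin N) :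
    wgt J β i (flp τ i) = - wgt J β i τ := by
  unfold wgt
  rw [gibbs_flp J β hsym hdiag τ i, localField_flp_self J hdiag τ i]
  rw [show flp τ i i = !(τ i) from flp_apply_self τ i, spin_not]
  set m := localField J τ i
  set P := gibbs J β τ
  -- goal: exp(-2βsm) * P * (m * (-s - tanh(βm))) = -(P * (m * (s - tanh(βm))))
  have key : ∀ s : ℝ, s = 1 ∨ s = -1 →
      Real.exp (-2 * β * s * m) * (-s - Real.tanh (β * m)) = -(s - Real.tanh (β * m)) := by
    intro s hs
    rcases hs with rfl | rfl
    · have := exp_tanh_identity (β * m)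
      have harg : -2 * β * (1:ℝ) * m = -(2 * (β * m)) := by ring
      rw [harg]
      linear_combination (-1 : ℝ) * this
    · have := exp_tanh_identity (-(β * m))
      rw [Real.tanh_neg] at this
      have harg : -2 * β * (-1:ℝ) * m = -(2 * (-(β * m))) := by ring
      rw [harg]
      linear_combination this
  have hs : spin (τ i) = 1 ∨ spin (τ i) = -1 := by cases τ i <;> simp [spin]
  have := key (spin (τ i)) hs
  linear_combination (P * m) * this


/-- error term -/
def rho (i : Fin N) (τ : Fin N → Bool) (j : Fin N) : ℝ :=
  localField J τ j *
      ((Real.tanh (β * localField J τ j) - Real.tanh (β * localField J (flp τ i) j))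
        - β * (localField J τ j - localField J (flp τ i) j)
          * (1 - Real.tanh (β * localField J τ j) ^ 2))
    - (localField J τ j - localField J (flp τ i) j) *
        (Real.tanh (β * localField J τ j) - Real.tanh (β * localField J (flp τ i) j))

lemma rho_bound (hsym : J.IsSymm) (hβ : 0 ≤ β) (i : Fin N) (τ : Fin N → Bool) (j : Fin N) :
    |rho J β i τ j| ≤ 2 * β ^ 2 * (J i j) ^ 2 * |localField J τ j|
      + 4 * β * (J i j) ^ 2 := by
  have hJij : J j i = J i j := by
    conv_lhs => rw [← hsym]
    rfl
  set a := localField J τ j with ha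
  set a' := localField J (flp τ i) j with ha'
  have hd : a - a' = 2 * spin (τ i) * J j i := by
    rw [ha', localField_flp]; ring
  have habsd : |a - a'| = 2 * |J i j| := by
    rw [hd, hJij, abs_mul, abs_mul, abs_spin]
    norm_num
  have hΔ : |Real.tanh (β * a) - Real.tanh (β * a')| ≤ β * |a - a'| := by
    have := tanh_lipschitz (β * a) (β * a')
    calc |Real.tanh (β * a) - Real.tanh (β * a')| ≤ |β * a - β * a'| := this
    _ = β * |a - a'| := by rw [show β * a - β * a' = β * (a - a') from by ring, abs_mul,
          abs_of_nonneg hβ]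
  have hK : |(Real.tanh (β * a) - Real.tanh (β * a'))
      - β * (a - a') * (1 - Real.tanh (β * a) ^ 2)| ≤ β ^ 2 * (a - a') ^ 2 / 2 := by
    have h := tanh_taylor (β * a) (β * a')
    have harg : β * a' - β * a = -(β * (a - a')) := by ring
    rw [harg] at h
    have : (Real.tanh (β * a) - Real.tanh (β * a'))
        - β * (a - a') * (1 - Real.tanh (β * a) ^ 2)
        = -(Real.tanh (β * a') - Real.tanh (β * a)
            - (-(β * (a - a'))) * (1 - Real.tanh (β * a) ^ 2)) := by ring
    rw [this, abs_neg]
    calc _ ≤ (-(β * (a - a'))) ^ 2 / 2 := h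
    _ = β ^ 2 * (a - a') ^ 2 / 2 := by ring
  have habs : |rho J β i τ j| ≤ |a| * (β ^ 2 * (a - a') ^ 2 / 2) + |a - a'| * (β * |a - a'|) := by
    unfold rho
    rw [← ha, ← ha']
    calc |a * ((Real.tanh (β * a) - Real.tanh (β * a'))
          - β * (a - a') * (1 - Real.tanh (β * a) ^ 2))
        - (a - a') * (Real.tanh (β * a) - Real.tanh (β * a'))|
        ≤ |a * ((Real.tanh (β * a) - Real.tanh (β * a'))
          - β * (a - a') * (1 - Real.tanh (β * a) ^ 2))|
          + |(a - a') * (Real.tanh (β * a) - Real.tanh (β * a'))| := abs_sub _ _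
    _ ≤ |a| * (β ^ 2 * (a - a') ^ 2 / 2) + |a - a'| * (β * |a - a'|) := by
        rw [abs_mul, abs_mul]
        have h1 := mul_le_mul_of_nonneg_left hK (abs_nonneg a)
        have h2 := mul_le_mul_of_nonneg_left hΔ (abs_nonneg (a - a'))
        linarith
  calc |rho J β i τ j| ≤ |a| * (β ^ 2 * (a - a') ^ 2 / 2) + |a - a'| * (β * |a - a'|) := habs
  _ = 2 * β ^ 2 * (J i j) ^ 2 * |a| + 4 * β * (J i j) ^ 2 := by
      have h1 : (a - a') ^ 2 = 4 * (J i j) ^ 2 := by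
        rw [show (a-a')^2 = |a - a'|^2 from (sq_abs _).symm, habsd]
        rw [show (2 * |J i j|)^2 = 4 * |J i j|^2 from by ring, sq_abs]
      rw [h1, habsd]
      rw [show (2 * |J i j|) * (β * (2 * |J i j|)) = 4 * β * |J i j|^2 from by ring, sq_abs]
      ring

lemma scoreDiff (hsym : J.IsSymm) (hdiag : ∀ i, J i i = 0) (hN0 : (N:ℝ) ≠ 0)
    (τ : Fin N → Bool) (i : Fin N) :
    (N:ℝ) * (score J β τ - score J β (flp τ i)) =
      4 * spin (τ i) * localField J τ i
      - 2 * spin (τ i) * (∑ j, J i j * Real.tanh (β * localField J τ j))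
      - 2 * β * spin (τ i) *
          (∑ j, J i j * (localField J τ j * (1 - Real.tanh (β * localField J τ j) ^ 2)))
      - ∑ j, rho J β i τ j := by
  have hJ : ∀ a b : Fin N, J a b = J b a := fun a b => by
    conv_lhs => rw [← hsym]
    rfl
  have hNs : ∀ σ : Fin N → Bool, (N:ℝ) * score J β σ =
      ∑ j, localField J σ j * (spin (σ j) - Real.tanh (β * localField J σ j)) := by
    intro σ
    unfold score
    rw [← mul_assoc, mul_one_div_cancel hN0, one_mul]
  have key : ∀ j, localField J τ j * (spin (τ j) - Real.tanh (β * localField J τ j))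
      - localField J (flp τ i) j * (spin (flp τ i j)
          - Real.tanh (β * localField J (flp τ i) j))
    = 2 * spin (τ i) * (J i j * spin (τ j))
      - 2 * spin (τ i) * (J i j * Real.tanh (β * localField J τ j))
      - 2 * β * spin (τ i) *
          (J i j * (localField J τ j * (1 - Real.tanh (β * localField J τ j) ^ 2)))
      - rho J β i τ j
      + (if j = i then 2 * spin (τ i) * localField J τ i else 0) := by
    intro j
    rcases eq_or_ne j i with rfl | h
    · unfold rho
      rw [localField_flp_self J hdiag τ j, flp_apply_self, spin_not, hdiag j]
      simp only [eq_self_iff_true, if_true]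
      ring
    · unfold rho
      have hd : localField J (flp τ i) j = localField J τ j - 2 * spin (τ i) * J j i :=
        localField_flp J τ i j
      rw [hd, flp_apply_ne τ h, hJ j i]
      simp only [if_neg h]
      ring
  rw [mul_sub, hNs τ, hNs (flp τ i), ← Finset.sum_sub_distrib]
  rw [Finset.sum_congr rfl (fun j _ => key j)]
  rw [Finset.sum_add_distrib, Finset.sum_ite_eq' Finset.univ i
    (fun _ => 2 * spin (τ i) * localField J τ i)]
  rw [Finset.sum_sub_distrib, Finset.sum_sub_distrib, Finset.sum_sub_distrib]
  rw [← Finset.mul_sum, ← Finset.mul_sum, ← Finset.mul_sum]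
  have hm : ∑ j, J i j * spin (τ j) = localField J τ i := rfl
  rw [hm]
  simp only [Finset.mem_univ, if_true]
  ring


lemma mulVec_sq_sum (hnorm : ‖Matrix.toEuclideanCLM (𝕜 := ℝ) J‖ ≤ 1) (v : Fin N → ℝ) :
    ∑ i, (J.mulVec v i) ^ 2 ≤ ∑ i, (v i) ^ 2 := by
  set x : EuclideanSpace ℝ (Fin N) := (WithLp.equiv 2 (Fin N → ℝ)).symm v with hx
  have happ : Matrix.toEuclideanCLM (𝕜 := ℝ) J x
      = (WithLp.equiv 2 (Fin N → ℝ)).symm (J.mulVec v) := by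
    rw [hx, WithLp.equiv_symm_apply, Matrix.toEuclideanCLM_toLp]
  have hle : ‖Matrix.toEuclideanCLM (𝕜 := ℝ) J x‖ ≤ ‖x‖ := by
    calc ‖Matrix.toEuclideanCLM (𝕜 := ℝ) J x‖
        ≤ ‖Matrix.toEuclideanCLM (𝕜 := ℝ) J‖ * ‖x‖ := ContinuousLinearMap.le_opNorm _ x
    _ ≤ 1 * ‖x‖ := mul_le_mul_of_nonneg_right hnorm (norm_nonneg x)
    _ = ‖x‖ := one_mul _
  rw [happ, hx] at hle
  have hn : ∀ w : Fin N → ℝ, ‖(WithLp.equiv 2 (Fin N → ℝ)).symm w‖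
      = Real.sqrt (∑ i, (w i) ^ 2) := by
    intro w
    rw [EuclideanSpace.norm_eq]
    congr 1
    apply Finset.sum_congr rfl
    intro i _
    rw [WithLp.equiv_symm_apply, PiLp.toLp_apply, Real.norm_eq_abs, sq_abs]
  rw [hn, hn] at hle
  have h1 : 0 ≤ ∑ i, (J.mulVec v i) ^ 2 := Finset.sum_nonneg fun i _ => sq_nonneg _
  have h2 : 0 ≤ ∑ i, (v i) ^ 2 := Finset.sum_nonneg fun i _ => sq_nonneg _
  nlinarith [Real.sq_sqrt h1, Real.sq_sqrt h2, Real.sqrt_nonneg (∑ i, (v i) ^ 2),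
    Real.sqrt_nonneg (∑ i, (J.mulVec v i) ^ 2)]

lemma row_sq_sum (hsym : J.IsSymm) (hnorm : ‖Matrix.toEuclideanCLM (𝕜 := ℝ) J‖ ≤ 1)
    (i : Fin N) : ∑ j, (J i j) ^ 2 ≤ 1 := by
  have hJ : ∀ a b : Fin N, J a b = J b a := fun a b => by
    conv_lhs => rw [← hsym]
    rfl
  set v : Fin N → ℝ := Pi.single i (1:ℝ) with hvdef
  have h := mulVec_sq_sum J hnorm v
  have hv : ∀ k, J.mulVec v k = J k i := by
    intro k
    rw [hvdef, Matrix.mulVec_single]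
    simp
  rw [Finset.sum_congr rfl (fun k _ => by rw [hv k])] at h
  have hs : ∑ k, (v k) ^ 2 = 1 := by
    rw [hvdef]
    rw [Finset.sum_eq_single i]
    · simp
    · intro k _ hk
      simp [Pi.single_apply, hk]
    · simp
  rw [hs] at h
  calc ∑ j, (J i j) ^ 2 = ∑ j, (J j i) ^ 2 := by
        apply Finset.sum_congr rfl
        intro j _
        rw [hJ i j]
  _ ≤ 1 := h

lemma cs_abs (f g : Fin N → ℝ) (hf : ∑ i, (f i) ^ 2 ≤ (N:ℝ)) (hg : ∑ i, (g i) ^ 2 ≤ (N:ℝ)) :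
    ∑ i, |f i| * |g i| ≤ (N:ℝ) := by
  have hN : (0:ℝ) ≤ N := Nat.cast_nonneg N
  have h := Finset.sum_mul_sq_le_sq_mul_sq Finset.univ (fun i => |f i|) (fun i => |g i|)
  have hf' : ∑ i, |f i| ^ 2 = ∑ i, (f i) ^ 2 := by
    apply Finset.sum_congr rfl; intro i _; rw [sq_abs]
  have hg' : ∑ i, |g i| ^ 2 = ∑ i, (g i) ^ 2 := by
    apply Finset.sum_congr rfl; intro i _; rw [sq_abs]
  rw [hf', hg'] at h
  have hpos : 0 ≤ ∑ i, |f i| * |g i| :=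
    Finset.sum_nonneg fun i _ => mul_nonneg (abs_nonneg _) (abs_nonneg _)
  nlinarith [mul_le_mul hf hg (Finset.sum_nonneg fun i _ => sq_nonneg (g i)) hN]


/-- the bound function -/
def Bf (i : Fin N) (τ : Fin N → Bool) : ℝ :=
  4 * (localField J τ i) ^ 2
  + 2 * |localField J τ i| * |∑ j, J i j * Real.tanh (β * localField J τ j)|
  + 2 * β * |localField J τ i| *
      |∑ j, J i j * (localField J τ j * (1 - Real.tanh (β * localField J τ j) ^ 2))|
  + |localField J τ i| *
      (∑ j, (2 * β ^ 2 * (J i j) ^ 2 * |localField J τ j| + 4 * β * (J i j) ^ 2))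

lemma Bf_nonneg (hβ : 0 ≤ β) (i : Fin N) (τ : Fin N → Bool) : 0 ≤ Bf J β i τ := by
  unfold Bf
  have h4 : 0 ≤ ∑ j, (2 * β ^ 2 * (J i j) ^ 2 * |localField J τ j| + 4 * β * (J i j) ^ 2) :=
    Finset.sum_nonneg fun j _ => by positivity
  positivity

lemma wgt_diff_le (hsym : J.IsSymm) (hdiag : ∀ i, J i i = 0) (hβ : 0 ≤ β) (hN0 : (N:ℝ) ≠ 0)
    (hNpos : (0:ℝ) < N) (i : Fin N) (τ : Fin N → Bool) :
    (score J β τ - score J β (flp τ i)) * wgt J β i τ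
      ≤ gibbs J β τ * ((2 / (N:ℝ)) * Bf J β i τ) := by
  have hkey : |localField J τ i * ((N:ℝ) * (score J β τ - score J β (flp τ i)))|
      ≤ Bf J β i τ := by
    rw [scoreDiff J β hsym hdiag hN0 τ i]
    set mi := localField J τ i with hmi
    set s := spin (τ i) with hs
    set T := ∑ j, J i j * Real.tanh (β * localField J τ j) with hT
    set G := ∑ j, J i j * (localField J τ j * (1 - Real.tanh (β * localField J τ j) ^ 2)) with hG
    set R := ∑ j, rho J β i τ j with hR
    have hexp : mi * (4 * s * mi - 2 * s * T - 2 * β * s * G - R)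
        = 4 * s * mi ^ 2 - 2 * s * mi * T - 2 * β * s * (mi * G) - mi * R := by ring
    rw [hexp]
    have habs : |4 * s * mi ^ 2 - 2 * s * mi * T - 2 * β * s * (mi * G) - mi * R|
        ≤ |4 * s * mi ^ 2| + |2 * s * mi * T| + |2 * β * s * (mi * G)| + |mi * R| := by
      calc |4 * s * mi ^ 2 - 2 * s * mi * T - 2 * β * s * (mi * G) - mi * R|
          ≤ |4 * s * mi ^ 2 - 2 * s * mi * T - 2 * β * s * (mi * G)| + |mi * R| := abs_sub _ _
      _ ≤ |4 * s * mi ^ 2 - 2 * s * mi * T| + |2 * β * s * (mi * G)| + |mi * R| := by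
          have := abs_sub (4 * s * mi ^ 2 - 2 * s * mi * T) (2 * β * s * (mi * G))
          linarith
      _ ≤ |4 * s * mi ^ 2| + |2 * s * mi * T| + |2 * β * s * (mi * G)| + |mi * R| := by
          have := abs_sub (4 * s * mi ^ 2) (2 * s * mi * T)
          linarith
    have h1 : |4 * s * mi ^ 2| = 4 * mi ^ 2 := by
      rw [abs_mul, abs_mul, hs, abs_spin]
      rw [abs_of_nonneg (by norm_num : (0:ℝ) ≤ 4), abs_of_nonneg (sq_nonneg mi)]
      ring
    have h2 : |2 * s * mi * T| = 2 * |mi| * |T| := by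
      rw [abs_mul, abs_mul, abs_mul, hs, abs_spin]
      rw [abs_of_nonneg (by norm_num : (0:ℝ) ≤ 2)]
      ring
    have h3 : |2 * β * s * (mi * G)| = 2 * β * |mi| * |G| := by
      rw [abs_mul, abs_mul, abs_mul, abs_mul, hs, abs_spin]
      rw [abs_of_nonneg (by norm_num : (0:ℝ) ≤ 2), abs_of_nonneg hβ]
      ring
    have h4 : |mi * R| ≤ |mi| *
        (∑ j, (2 * β ^ 2 * (J i j) ^ 2 * |localField J τ j| + 4 * β * (J i j) ^ 2)) := by
      rw [abs_mul]
      apply mul_le_mul_of_nonneg_left _ (abs_nonneg mi)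
      calc |R| ≤ ∑ j, |rho J β i τ j| := by rw [hR]; exact Finset.abs_sum_le_sum_abs _ _
      _ ≤ ∑ j, (2 * β ^ 2 * (J i j) ^ 2 * |localField J τ j| + 4 * β * (J i j) ^ 2) :=
          Finset.sum_le_sum fun j _ => rho_bound J β hsym hβ i τ j
    unfold Bf
    rw [← hmi, ← hT, ← hG]
    calc |4 * s * mi ^ 2 - 2 * s * mi * T - 2 * β * s * (mi * G) - mi * R|
        ≤ |4 * s * mi ^ 2| + |2 * s * mi * T| + |2 * β * s * (mi * G)| + |mi * R| := habs
    _ ≤ 4 * mi ^ 2 + 2 * |mi| * |T| + 2 * β * |mi| * |G| + |mi| *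
          (∑ j, (2 * β ^ 2 * (J i j) ^ 2 * |localField J τ j| + 4 * β * (J i j) ^ 2)) := by
        rw [h1, h2, h3]
        linarith
  -- now the pointwise inequality
  unfold wgt
  have hst : |spin (τ i) - Real.tanh (β * localField J τ i)| ≤ 2 := by
    calc |spin (τ i) - Real.tanh (β * localField J τ i)|
        ≤ |spin (τ i)| + |Real.tanh (β * localField J τ i)| := abs_sub _ _
    _ ≤ 1 + 1 := by
        have := abs_tanh_le_one (β * localField J τ i)
        rw [abs_spin]
        linarith
    _ = 2 := by norm_num
  have hprod : (score J β τ - score J β (flp τ i)) *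
      (localField J τ i * (spin (τ i) - Real.tanh (β * localField J τ i)))
      ≤ (2 / (N:ℝ)) * Bf J β i τ := by
    set Δ := score J β τ - score J β (flp τ i) with hΔ
    set mi := localField J τ i with hmi
    have e2 : |Δ * mi| ≤ Bf J β i τ / (N:ℝ) := by
      rw [le_div_iff₀ hNpos]
      calc |Δ * mi| * (N:ℝ) = |mi * ((N:ℝ) * Δ)| := by
            rw [← abs_of_pos hNpos, ← abs_mul]
            congr 1
            rw [abs_of_pos hNpos]
            ring
      _ ≤ Bf J β i τ := hkey
    calc Δ * (mi * (spin (τ i) - Real.tanh (β * mi)))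
        ≤ |Δ * (mi * (spin (τ i) - Real.tanh (β * mi)))| := le_abs_self _
    _ = |Δ * mi| * |spin (τ i) - Real.tanh (β * mi)| := by
        rw [show Δ * (mi * (spin (τ i) - Real.tanh (β * mi)))
          = (Δ * mi) * (spin (τ i) - Real.tanh (β * mi)) from by ring, abs_mul]
    _ ≤ (Bf J β i τ / (N:ℝ)) * 2 :=
        mul_le_mul e2 hst (abs_nonneg _) (le_trans (abs_nonneg _) e2)
    _ = (2 / (N:ℝ)) * Bf J β i τ := by ring
  calc (score J β τ - score J β (flp τ i)) *
      (gibbs J β τ * (localField J τ i * (spin (τ i) - Real.tanh (β * localField J τ i))))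
      = gibbs J β τ * ((score J β τ - score J β (flp τ i)) *
          (localField J τ i * (spin (τ i) - Real.tanh (β * localField J τ i)))) := by ring
  _ ≤ gibbs J β τ * ((2 / (N:ℝ)) * Bf J β i τ) :=
      mul_le_mul_of_nonneg_left hprod (gibbs_nonneg J β τ)


lemma Bf_sum_le (hsym : J.IsSymm) (hnorm : ‖Matrix.toEuclideanCLM (𝕜 := ℝ) J‖ ≤ 1)
    (hβ : 0 ≤ β) (τ : Fin N → Bool) :
    ∑ i, Bf J β i τ ≤ (6 + 6 * β + 2 * β ^ 2) * (N:ℝ) := by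
  have hJ : ∀ a b : Fin N, J a b = J b a := fun a b => by
    conv_lhs => rw [← hsym]
    rfl
  set m : Fin N → ℝ := fun i => localField J τ i with hm
  set t : Fin N → ℝ := fun j => Real.tanh (β * m j) with ht
  set g : Fin N → ℝ := fun j => m j * (1 - Real.tanh (β * m j) ^ 2) with hg
  have hmmv : ∀ i, m i = J.mulVec (fun j => spin (τ j)) i := fun i => rfl
  have hspin : ∑ j, (spin (τ j)) ^ 2 = (N:ℝ) := by
    rw [Finset.sum_congr rfl (fun j _ => by rw [show (spin (τ j))^2 = 1 from by
      rw [sq]; exact spin_mul_self (τ j)])]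
    simp
  have hm2 : ∑ i, (m i) ^ 2 ≤ (N:ℝ) := by
    rw [Finset.sum_congr rfl (fun i _ => by rw [hmmv i])]
    calc ∑ i, (J.mulVec (fun j => spin (τ j)) i) ^ 2 ≤ ∑ j, (spin (τ j)) ^ 2 :=
        mulVec_sq_sum J hnorm _
    _ = (N:ℝ) := hspin
  have ht2 : ∑ j, (t j) ^ 2 ≤ (N:ℝ) := by
    calc ∑ j, (t j) ^ 2 ≤ ∑ _j : Fin N, (1:ℝ) :=
        Finset.sum_le_sum fun j _ => by
          show Real.tanh (β * m j) ^ 2 ≤ 1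
          exact tanh_sq_le_one (β * m j)
    _ = (N:ℝ) := by simp
  have hg2 : ∑ j, (g j) ^ 2 ≤ (N:ℝ) := by
    calc ∑ j, (g j) ^ 2 ≤ ∑ j, (m j) ^ 2 := by
          apply Finset.sum_le_sum
          intro j _
          show (m j * (1 - Real.tanh (β * m j) ^ 2)) ^ 2 ≤ (m j) ^ 2
          have h1 : 0 ≤ 1 - Real.tanh (β * m j) ^ 2 := by
            have := tanh_sq_le_one (β * m j); linarith
          have h2 : 1 - Real.tanh (β * m j) ^ 2 ≤ 1 := by
            have := sq_nonneg (Real.tanh (β * m j)); linarith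
          have h3 : (1 - Real.tanh (β * m j) ^ 2) ^ 2 ≤ 1 := by nlinarith
          calc (m j * (1 - Real.tanh (β * m j) ^ 2)) ^ 2
              = (m j) ^ 2 * (1 - Real.tanh (β * m j) ^ 2) ^ 2 := by ring
          _ ≤ (m j) ^ 2 * 1 := mul_le_mul_of_nonneg_left h3 (sq_nonneg _)
          _ = (m j) ^ 2 := mul_one _
    _ ≤ (N:ℝ) := hm2
  have hJt2 : ∑ i, (∑ j, J i j * t j) ^ 2 ≤ (N:ℝ) := by
    have : ∀ i, (∑ j, J i j * t j) = J.mulVec t i := fun i => rfl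
    rw [Finset.sum_congr rfl (fun i _ => by rw [this i])]
    exact le_trans (mulVec_sq_sum J hnorm t) ht2
  have hJg2 : ∑ i, (∑ j, J i j * g j) ^ 2 ≤ (N:ℝ) := by
    have : ∀ i, (∑ j, J i j * g j) = J.mulVec g i := fun i => rfl
    rw [Finset.sum_congr rfl (fun i _ => by rw [this i])]
    exact le_trans (mulVec_sq_sum J hnorm g) hg2
  have habs_m : ∑ i, |m i| ≤ (N:ℝ) := by
    have := cs_abs (N := N) m (fun _ => 1) hm2 (by simp)
    calc ∑ i, |m i| = ∑ i, |m i| * |(1:ℝ)| := by simp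
    _ ≤ (N:ℝ) := this
  have hrow : ∀ i, ∑ j, (J i j) ^ 2 ≤ 1 := row_sq_sum J hsym hnorm
  have hcol : ∀ j, ∑ i, (J i j) ^ 2 ≤ 1 := by
    intro j
    calc ∑ i, (J i j) ^ 2 = ∑ i, (J j i) ^ 2 := by
          apply Finset.sum_congr rfl
          intro i _
          rw [hJ i j]
    _ ≤ 1 := hrow j
  -- term by term
  have t1 : ∑ i, 4 * (m i) ^ 2 ≤ 4 * (N:ℝ) := by
    rw [← Finset.mul_sum]
    linarith
  have t2 : ∑ i, 2 * |m i| * |∑ j, J i j * t j| ≤ 2 * (N:ℝ) := by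
    have := cs_abs (N := N) m (fun i => ∑ j, J i j * t j) hm2 hJt2
    calc ∑ i, 2 * |m i| * |∑ j, J i j * t j|
        = 2 * ∑ i, |m i| * |∑ j, J i j * t j| := by
          rw [Finset.mul_sum]
          apply Finset.sum_congr rfl
          intro i _
          ring
    _ ≤ 2 * (N:ℝ) := by linarith
  have t3 : ∑ i, 2 * β * |m i| * |∑ j, J i j * g j| ≤ 2 * β * (N:ℝ) := by
    have := cs_abs (N := N) m (fun i => ∑ j, J i j * g j) hm2 hJg2
    calc ∑ i, 2 * β * |m i| * |∑ j, J i j * g j|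
        = 2 * β * ∑ i, |m i| * |∑ j, J i j * g j| := by
          rw [Finset.mul_sum]
          apply Finset.sum_congr rfl
          intro i _
          ring
    _ ≤ 2 * β * (N:ℝ) := by nlinarith
  have t4 : ∑ i, |m i| * (∑ j, (2 * β ^ 2 * (J i j) ^ 2 * |m j| + 4 * β * (J i j) ^ 2))
      ≤ 2 * β ^ 2 * (N:ℝ) + 4 * β * (N:ℝ) := by
    have hsplit : ∀ i, |m i| * (∑ j, (2 * β ^ 2 * (J i j) ^ 2 * |m j| + 4 * β * (J i j) ^ 2))
        = (∑ j, 2 * β ^ 2 * (J i j) ^ 2 * (|m i| * |m j|)) + |m i| * (∑ j, 4 * β * (J i j) ^ 2) := by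
      intro i
      rw [Finset.sum_add_distrib, mul_add, Finset.mul_sum, Finset.mul_sum]
      congr 1
      apply Finset.sum_congr rfl
      intro j _
      ring
    rw [Finset.sum_congr rfl (fun i _ => hsplit i), Finset.sum_add_distrib]
    have p1 : ∑ i, ∑ j, 2 * β ^ 2 * (J i j) ^ 2 * (|m i| * |m j|) ≤ 2 * β ^ 2 * (N:ℝ) := by
      have hpt : ∀ i j, 2 * β ^ 2 * (J i j) ^ 2 * (|m i| * |m j|)
          ≤ β ^ 2 * (J i j) ^ 2 * ((m i) ^ 2 + (m j) ^ 2) := by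
        intro i j
        have h1 : |m i| * |m j| ≤ ((m i) ^ 2 + (m j) ^ 2) / 2 := by
          nlinarith [sq_nonneg (|m i| - |m j|), sq_abs (m i), sq_abs (m j)]
        have h2 : (0:ℝ) ≤ 2 * β ^ 2 * (J i j) ^ 2 := by positivity
        nlinarith
      calc ∑ i, ∑ j, 2 * β ^ 2 * (J i j) ^ 2 * (|m i| * |m j|)
          ≤ ∑ i, ∑ j, β ^ 2 * (J i j) ^ 2 * ((m i) ^ 2 + (m j) ^ 2) :=
            Finset.sum_le_sum fun i _ => Finset.sum_le_sum fun j _ => hpt i j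
      _ = β ^ 2 * ((∑ i, (m i) ^ 2 * ∑ j, (J i j) ^ 2) + ∑ j, (m j) ^ 2 * ∑ i, (J i j) ^ 2) := by
            have e1 : ∑ i, ∑ j, β ^ 2 * (J i j) ^ 2 * ((m i) ^ 2 + (m j) ^ 2)
                = (∑ i, ∑ j, β ^ 2 * (J i j) ^ 2 * (m i) ^ 2)
                  + ∑ i, ∑ j, β ^ 2 * (J i j) ^ 2 * (m j) ^ 2 := by
              rw [← Finset.sum_add_distrib]
              apply Finset.sum_congr rfl
              intro i _
              rw [← Finset.sum_add_distrib]
              apply Finset.sum_congr rfl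
              intro j _
              ring
            rw [e1]
            have e2 : ∑ i, ∑ j, β ^ 2 * (J i j) ^ 2 * (m i) ^ 2
                = β ^ 2 * ∑ i, (m i) ^ 2 * ∑ j, (J i j) ^ 2 := by
              rw [Finset.mul_sum]
              apply Finset.sum_congr rfl
              intro i _
              rw [Finset.mul_sum, Finset.mul_sum]
              apply Finset.sum_congr rfl
              intro j _
              ring
            have e3 : ∑ i, ∑ j, β ^ 2 * (J i j) ^ 2 * (m j) ^ 2
                = β ^ 2 * ∑ j, (m j) ^ 2 * ∑ i, (J i j) ^ 2 := by
              rw [Finset.sum_comm]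
              rw [Finset.mul_sum]
              apply Finset.sum_congr rfl
              intro j _
              rw [Finset.mul_sum, Finset.mul_sum]
              apply Finset.sum_congr rfl
              intro i _
              ring
            rw [e2, e3]
            ring
      _ ≤ β ^ 2 * ((N:ℝ) + (N:ℝ)) := by
            have q1 : ∑ i, (m i) ^ 2 * ∑ j, (J i j) ^ 2 ≤ (N:ℝ) := by
              calc ∑ i, (m i) ^ 2 * ∑ j, (J i j) ^ 2 ≤ ∑ i, (m i) ^ 2 * 1 :=
                  Finset.sum_le_sum fun i _ =>
                    mul_le_mul_of_nonneg_left (hrow i) (sq_nonneg _)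
              _ = ∑ i, (m i) ^ 2 := by simp
              _ ≤ (N:ℝ) := hm2
            have q2 : ∑ j, (m j) ^ 2 * ∑ i, (J i j) ^ 2 ≤ (N:ℝ) := by
              calc ∑ j, (m j) ^ 2 * ∑ i, (J i j) ^ 2 ≤ ∑ j, (m j) ^ 2 * 1 :=
                  Finset.sum_le_sum fun j _ =>
                    mul_le_mul_of_nonneg_left (hcol j) (sq_nonneg _)
              _ = ∑ j, (m j) ^ 2 := by simp
              _ ≤ (N:ℝ) := hm2
            nlinarith [sq_nonneg β]
      _ = 2 * β ^ 2 * (N:ℝ) := by ring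
    have p2 : ∑ i, |m i| * (∑ j, 4 * β * (J i j) ^ 2) ≤ 4 * β * (N:ℝ) := by
      calc ∑ i, |m i| * (∑ j, 4 * β * (J i j) ^ 2)
          ≤ ∑ i, |m i| * (4 * β) := by
            apply Finset.sum_le_sum
            intro i _
            apply mul_le_mul_of_nonneg_left _ (abs_nonneg _)
            calc ∑ j, 4 * β * (J i j) ^ 2 = 4 * β * ∑ j, (J i j) ^ 2 := by
                  rw [Finset.mul_sum]
            _ ≤ 4 * β * 1 := by
                have := hrow i
                nlinarith
            _ = 4 * β := mul_one _
      _ = (∑ i, |m i|) * (4 * β) := by rw [← Finset.sum_mul]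
      _ ≤ (N:ℝ) * (4 * β) := by nlinarith [habs_m]
      _ = 4 * β * (N:ℝ) := by ring
    linarith
  unfold Bf
  rw [Finset.sum_add_distrib, Finset.sum_add_distrib, Finset.sum_add_distrib]
  have := t1
  have := t2
  have := t3
  have := t4
  nlinarith [Nat.cast_nonneg (α := ℝ) N]

end ChatterjeeAux


open ChatterjeeAux in
/-- Lemma 1.2 of Chatterjee (with the explicit constant of equation (15)): for `J`
symmetric with zero diagonal and `‖J‖ ≤ 1`, `E_β[S_σ(β)²] ≤ (6 + 6β + 2β²)/N`. -/
theorem score_second_moment {N : ℕ} (hN : 0 < N) (J : Matrix (Fin N) (Fin N) ℝ)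
    (hsym : J.IsSymm) (hdiag : ∀ i, J i i = 0)
    (hnorm : ‖Matrix.toEuclideanCLM (𝕜 := ℝ) J‖ ≤ 1) (β : ℝ) (hβ : 0 ≤ β) :
    ∑ τ, (score J β τ) ^ 2 * gibbs J β τ ≤ (6 + 6 * β + 2 * β ^ 2) / N := by
  classical
  have hN0 : (N:ℝ) ≠ 0 := Nat.cast_ne_zero.mpr hN.ne'
  have hNpos : (0:ℝ) < N := by exact_mod_cast hN
  have stepA : ∑ τ, (score J β τ) ^ 2 * gibbs J β τ
      = (1/(N:ℝ)) * ∑ i, ∑ τ, score J β τ * wgt J β i τ := by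
    have h1 : ∀ τ, (score J β τ) ^ 2 * gibbs J β τ
        = (1/(N:ℝ)) * ∑ i, score J β τ * wgt J β i τ := by
      intro τ
      have hX : ∑ i, localField J τ i * (spin (τ i) - Real.tanh (β * localField J τ i))
          = (N:ℝ) * score J β τ := by
        unfold score
        rw [← mul_assoc, mul_one_div_cancel hN0, one_mul]
      have h2 : ∑ i, score J β τ * wgt J β i τ
          = score J β τ * gibbs J β τ *
            ∑ i, localField J τ i * (spin (τ i) - Real.tanh (β * localField J τ i)) := by
        rw [Finset.mul_sum]
        apply Finset.sum_congr rfl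
        intro i _
        unfold ChatterjeeAux.wgt
        ring
      rw [h2, hX]
      field_simp
    rw [Finset.sum_congr rfl (fun τ _ => h1 τ), ← Finset.mul_sum, Finset.sum_comm]
  have stepB : ∀ i, ∑ τ : Fin N → Bool, score J β τ * wgt J β i τ
      = (1/2) * ∑ τ : Fin N → Bool,
          (score J β τ - score J β (flp τ i)) * wgt J β i τ := by
    intro i
    have hrev : ∑ τ : Fin N → Bool, score J β (flp τ i) * wgt J β i τ
        = - ∑ τ : Fin N → Bool, score J β τ * wgt J β i τ := by
      have hflip := sum_flp (N := N) i
        (fun τ => score J β (flp τ i) * wgt J β i τ)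
      rw [← hflip]
      rw [Finset.sum_congr rfl (fun τ _ => by
        show score J β (flp (flp τ i) i) * wgt J β i (flp τ i)
          = -(score J β τ * wgt J β i τ)
        rw [flp_flp, wgt_flp J β hsym hdiag, mul_neg])]
      rw [Finset.sum_neg_distrib]
    have hsub : ∑ τ : Fin N → Bool, (score J β τ - score J β (flp τ i)) * wgt J β i τ
        = (∑ τ : Fin N → Bool, score J β τ * wgt J β i τ)
          - ∑ τ : Fin N → Bool, score J β (flp τ i) * wgt J β i τ := by
      rw [← Finset.sum_sub_distrib]
      apply Finset.sum_congr rfl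
      intro τ _
      rw [sub_mul]
    rw [hsub, hrev]
    ring
  have hper : ∀ τ, ∑ i, gibbs J β τ * ((2/(N:ℝ)) * Bf J β i τ)
      = gibbs J β τ * ((2/(N:ℝ)) * ∑ i, Bf J β i τ) := by
    intro τ
    rw [Finset.mul_sum, Finset.mul_sum]
  calc ∑ τ, (score J β τ) ^ 2 * gibbs J β τ
      = (1/(N:ℝ)) * ∑ i, ∑ τ, score J β τ * wgt J β i τ := stepA
  _ = (1/(N:ℝ)) * ∑ i, (1/2) * ∑ τ : Fin N → Bool,
        (score J β τ - score J β (flp τ i)) * wgt J β i τ := by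
      rw [Finset.sum_congr rfl (fun i _ => stepB i)]
  _ ≤ (1/(N:ℝ)) * ∑ i, (1/2) * ∑ τ : Fin N → Bool,
        gibbs J β τ * ((2/(N:ℝ)) * Bf J β i τ) := by
      apply mul_le_mul_of_nonneg_left _ (by positivity)
      apply Finset.sum_le_sum
      intro i _
      apply mul_le_mul_of_nonneg_left _ (by norm_num)
      apply Finset.sum_le_sum
      intro τ _
      exact wgt_diff_le J β hsym hdiag hβ hN0 hNpos i τ
  _ = (1/(N:ℝ)^2) * ∑ τ : Fin N → Bool, gibbs J β τ * (∑ i, Bf J β i τ) := by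
      rw [← Finset.mul_sum, Finset.sum_comm]
      rw [Finset.sum_congr rfl (fun τ _ => hper τ)]
      rw [Finset.mul_sum, Finset.mul_sum, Finset.mul_sum]
      apply Finset.sum_congr rfl
      intro τ _
      field_simp
  _ ≤ (1/(N:ℝ)^2) * ∑ τ : Fin N → Bool,
        gibbs J β τ * ((6 + 6 * β + 2 * β ^ 2) * (N:ℝ)) := by
      apply mul_le_mul_of_nonneg_left _ (by positivity)
      apply Finset.sum_le_sum
      intro τ _
      exact mul_le_mul_of_nonneg_left (Bf_sum_le J β hsym hnorm hβ τ) (gibbs_nonneg J β τ)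
  _ = (6 + 6 * β + 2 * β ^ 2) / N := by
      rw [← Finset.sum_mul, sum_gibbs J β hN, one_mul]
      field_simp
end
end
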